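/- In every normal probe interval model of a connected probe interval graph G, each clique of G[P] is contained in the vertex set of exactly one column. -/

import Mathlib

open Set

/-- A set of columns is consecutive in the column order. -/
def ConsecSet {k : ℕ} (A : Set (Fin k)) : Prop :=
  ∀ i j l : Fin k, i ≤ j → j ≤ l → i ∈ A → l ∈ A → j ∈ A

/-- Every row of the 0-1 matrix `M` has a nonempty consecutive block of 1's. -/
def RowsOK {V : Type} {k : ℕ} (M : V → Fin k → Prop) : Prop :=
  ∀ v : V, {j | M v j}.Nonempty ∧ ConsecSet {j | M v j}

/-- The matrix `M` represents exactly the adjacencies of `G`, where `P` is the probe set: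
two distinct vertices are adjacent iff some column has a 1 in both rows and at least
one of the two vertices is a probe. -/
def Represents {V : Type} {k : ℕ} (G : SimpleGraph V) (P : Set V)
    (M : V → Fin k → Prop) : Prop :=
  ∀ u v : V, u ≠ v → (G.Adj u v ↔ (u ∈ P ∨ v ∈ P) ∧ ∃ j, M u j ∧ M v j)

/-- `M` is a probe interval model of `G` with probe set `P`. -/
def IsPIModel {V : Type} {k : ℕ} (G : SimpleGraph V) (P : Set V)
    (M : V → Fin k → Prop) : Prop :=
  RowsOK M ∧ Represents G P M

/-- The pairs of vertices that the matrix represents as adjacent. -/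
def RepAdj {V : Type} {k : ℕ} (P : Set V) (M : V → Fin k → Prop) (u v : V) : Prop :=
  u ≠ v ∧ (u ∈ P ∨ v ∈ P) ∧ ∃ j, M u j ∧ M v j

/-- `c` is the left endpoint of row `v`: the first column where the row has a 1. -/
def IsLeftEnd {V : Type} {k : ℕ} (M : V → Fin k → Prop) (v : V) (c : Fin k) : Prop :=
  M v c ∧ ∀ j, M v j → c ≤ j

/-- `c` is the right endpoint of row `v`: the last column where the row has a 1. -/
def IsRightEnd {V : Type} {k : ℕ} (M : V → Fin k → Prop) (v : V) (c : Fin k) : Prop :=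
  M v c ∧ ∀ j, M v j → j ≤ c

/-- A proper left endpoint: the left endpoint of a row with a 1 in more than one column. -/
def IsProperLeftEnd {V : Type} {k : ℕ} (M : V → Fin k → Prop) (v : V) (c : Fin k) : Prop :=
  IsLeftEnd M v c ∧ ∃ j, M v j ∧ j ≠ c

/-- A proper right endpoint: the right endpoint of a row with a 1 in more than one column. -/
def IsProperRightEnd {V : Type} {k : ℕ} (M : V → Fin k → Prop) (v : V) (c : Fin k) : Prop :=
  IsRightEnd M v c ∧ ∃ j, M v j ∧ j ≠ c

/-- `M'` is obtained from `M` by a contraction of row `v`: the first or last 1 of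
row `v` is changed to a 0, resulting in a shorter (still nonempty) interval. -/
def Contraction {V : Type} {k : ℕ} (M M' : V → Fin k → Prop) (v : V) : Prop :=
  ∃ c : Fin k, (IsProperLeftEnd M v c ∨ IsProperRightEnd M v c) ∧
    ∀ u j, M' u j ↔ M u j ∧ ¬(u = v ∧ j = c)

/-- Row `v` is taut: every contraction of it changes the set of vertex pairs that
the matrix represents as adjacent. -/
def TautRow {V : Type} {k : ℕ} (P : Set V) (M : V → Fin k → Prop) (v : V) : Prop :=
  ∀ M' : V → Fin k → Prop, Contraction M M' v → RepAdj P M' ≠ RepAdj P M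

/-- Every row of the model is taut. -/
def Taut {V : Type} {k : ℕ} (P : Set V) (M : V → Fin k → Prop) : Prop :=
  ∀ v : V, TautRow P M v

/-- The matrix obtained from `M` by merging the consecutive columns `i` and `i + 1`
(replacing them by their entrywise OR). -/
def mergeCols {V : Type} {k : ℕ} (M : V → Fin k → Prop) (i : ℕ) :
    V → Fin (k - 1) → Prop := fun v j =>
  if h1 : j.val < i then M v ⟨j.val, by have := j.isLt; omega⟩
  else if h2 : j.val = i then
    M v ⟨i, by have := j.isLt; omega⟩ ∨ M v ⟨i + 1, by have := j.isLt; omega⟩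
  else M v ⟨j.val + 1, by have := j.isLt; omega⟩

/-- The consecutive columns `i` and `i + 1` of the model `M` of `G` can be merged:
replacing them by their entrywise OR again yields a probe interval model representing
the same adjacencies. -/
def CanMerge {V : Type} {k : ℕ} (G : SimpleGraph V) (P : Set V)
    (M : V → Fin k → Prop) (i : ℕ) : Prop :=
  i + 1 < k ∧ IsPIModel G P (mergeCols M i)

/-- No two consecutive columns of the model can be merged. -/
def MinimalModel {V : Type} {k : ℕ} (G : SimpleGraph V) (P : Set V)
    (M : V → Fin k → Prop) : Prop :=
  ∀ i : ℕ, ¬ CanMerge G P M i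

/-- A normal probe interval model: a probe interval model that is taut and minimal. -/
def IsNormalModel {V : Type} {k : ℕ} (G : SimpleGraph V) (P : Set V)
    (M : V → Fin k → Prop) : Prop :=
  IsPIModel G P M ∧ Taut P M ∧ MinimalModel G P M

/-- The vertex set of a column: the vertices whose rows have a 1 in that column. -/
def colVerts {V : Type} {k : ℕ} (M : V → Fin k → Prop) (j : Fin k) : Set V :=
  {v | M v j}

/-- The probe set of a column. -/
def probeSetCol {V : Type} {k : ℕ} (P : Set V) (M : V → Fin k → Prop)
    (j : Fin k) : Set V :=
  {v | v ∈ P ∧ M v j}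

/-- The probe set of the column with (natural number) index `n`, empty if out of range. -/
def probeSetAt {W : Type} {K : ℕ} (P : Set W) (M : W → Fin K → Prop) (n : ℕ) : Set W :=
  {v | v ∈ P ∧ ∃ hn : n < K, M v ⟨n, hn⟩}

/-- `G` is a probe interval graph with respect to the probe set `P`. -/
def IsPIGraph {V : Type} (G : SimpleGraph V) (P : Set V) : Prop :=
  ∃ (k : ℕ) (M : V → Fin k → Prop), IsPIModel G P M

/-- `x` is a simplicial non-probe: a non-probe whose neighborhood induces a
complete subgraph. -/
def SimpNonProbe {V : Type} (G : SimpleGraph V) (P : Set V) (x : V) : Prop :=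
  x ∉ P ∧ G.IsClique (G.neighborSet x)

/-- The set `N_S` of simplicial non-probes. -/
def setNS {V : Type} (G : SimpleGraph V) (P : Set V) : Set V :=
  {x | SimpNonProbe G P x}

/-- `K` is (the vertex set of) a maximal complete subgraph of `H`. -/
def IsMaxClique {W : Type} (H : SimpleGraph W) (K : Set W) : Prop :=
  H.IsClique K ∧ ∀ K' : Set W, H.IsClique K' → K ⊆ K' → K' = K

/-- `K` is (the vertex set of) a maximal complete subgraph of `G[P]`. -/
def IsMaxPClique {V : Type} (G : SimpleGraph V) (P : Set V) (K : Set V) : Prop :=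
  (K ⊆ P ∧ K.Pairwise G.Adj) ∧
    ∀ K' : Set V, K' ⊆ P → K'.Pairwise G.Adj → K ⊆ K' → K' = K

/-- A clique column: its vertex set contains a clique of `G[P]`. -/
def IsCliqueCol {V : Type} {k : ℕ} (G : SimpleGraph V) (P : Set V)
    (M : V → Fin k → Prop) (j : Fin k) : Prop :=
  ∃ K : Set V, IsMaxPClique G P K ∧ K ⊆ colVerts M j

/-- A left semi-clique column: it contains a proper right endpoint of a probe and a
proper left endpoint of a non-probe, but no left endpoint of a probe and no right
endpoint of a non-probe. -/
def IsLeftSemiCol {V : Type} {k : ℕ} (P : Set V) (M : V → Fin k → Prop)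
    (j : Fin k) : Prop :=
  (∃ p ∈ P, IsProperRightEnd M p j) ∧ (∃ x, x ∉ P ∧ IsProperLeftEnd M x j) ∧
    (∀ p ∈ P, ¬ IsLeftEnd M p j) ∧ (∀ x, x ∉ P → ¬ IsRightEnd M x j)

/-- A right semi-clique column (symmetric to a left semi-clique column). -/
def IsRightSemiCol {V : Type} {k : ℕ} (P : Set V) (M : V → Fin k → Prop)
    (j : Fin k) : Prop :=
  (∃ p ∈ P, IsProperLeftEnd M p j) ∧ (∃ x, x ∉ P ∧ IsProperRightEnd M x j) ∧
    (∀ p ∈ P, ¬ IsRightEnd M p j) ∧ (∀ x, x ∉ P → ¬ IsLeftEnd M x j)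

/-- A semi-clique column: a left or right semi-clique column. -/
def IsSemiCol {V : Type} {k : ℕ} (P : Set V) (M : V → Fin k → Prop)
    (j : Fin k) : Prop :=
  IsLeftSemiCol P M j ∨ IsRightSemiCol P M j

/-- A simplicial column: not a clique column, its vertex set contains a simplicial
non-probe, and it contains no endpoint of a non-simplicial non-probe. -/
def IsSimpCol {V : Type} {k : ℕ} (G : SimpleGraph V) (P : Set V)
    (M : V → Fin k → Prop) (j : Fin k) : Prop :=
  ¬ IsCliqueCol G P M j ∧ (∃ x, SimpNonProbe G P x ∧ M x j) ∧
    ∀ x, x ∉ P → ¬ SimpNonProbe G P x → ¬ IsLeftEnd M x j ∧ ¬ IsRightEnd M x j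

/-- The probe set of the induced subgraph `G - N_S` on `V \ N_S`. -/
def probesPS {V : Type} (G : SimpleGraph V) (P : Set V) : Set ↥((setNS G P)ᶜ) :=
  {v | (v : V) ∈ P}

/-- The graph `G**` on `V \ N_S`: its edges are those of `G - N_S` together with the
pairs `x y` of non-probes such that `N(x) ∩ N(y)` equals a clique of `G[P]` or
contains two nonadjacent vertices. -/
def Gss {V : Type} (G : SimpleGraph V) (P : Set V) : SimpleGraph ↥((setNS G P)ᶜ) :=
  SimpleGraph.fromRel (fun u v =>
    G.Adj (u : V) (v : V) ∨
      ((u : V) ∉ P ∧ (v : V) ∉ P ∧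
        ((∃ K : Set V, IsMaxPClique G P K ∧
            G.neighborSet (u : V) ∩ G.neighborSet (v : V) = K) ∨
          (∃ a b : V, a ∈ G.neighborSet (u : V) ∩ G.neighborSet (v : V) ∧
            b ∈ G.neighborSet (u : V) ∩ G.neighborSet (v : V) ∧
            a ≠ b ∧ ¬ G.Adj a b))))

/-- `M` is a consecutive-ones ordered clique matrix of `H`: it has one column per
maximal clique of `H`, with a 1 in row `v` and column `K` exactly when `v ∈ K`, and
the 1's in every row are consecutive. -/
def IsC1CliqueMatrix {W : Type} (H : SimpleGraph W) {k : ℕ}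
    (M : W → Fin k → Prop) : Prop :=
  (∃ f : Fin k → Set W, Function.Injective f ∧
      (∀ j, IsMaxClique H (f j)) ∧ (∀ K, IsMaxClique H K → ∃ j, f j = K) ∧
      (∀ v j, M v j ↔ v ∈ f j)) ∧
    ∀ v : W, ConsecSet {j | M v j}

/-- A 0-1 matrix (with rows indexed by `R`) has the consecutive-ones property. -/
def HasC1P {R : Type} {n : ℕ} (M : R → Fin n → Prop) : Prop :=
  ∃ σ : Equiv.Perm (Fin n), ∀ r, ConsecSet {j | M r (σ j)}

/-- Two sets properly overlap. -/
def ProperOverlap {α : Type} (A B : Set α) : Prop :=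
  (A ∩ B).Nonempty ∧ (A \ B).Nonempty ∧ (B \ A).Nonempty

/-! Merging columns `i` and `i + 1` is the image of the matrix under the monotone surjection
`Fin k → Fin (k - 1)` that identifies `i` with `i + 1`, so rows stay intervals and a merge
can only create adjacencies between a row meeting column `i` and a row meeting column `i + 1`.
A maximal clique of `G[P]` lying in two columns lies in two consecutive ones, and then every
probe meeting one of these columns belongs to the clique, hence meets both: merging them
creates no new adjacency, contradicting minimality. Existence is the Helly property of
intervals. -/

theorem consecSet_iff_ordConnected {k : ℕ} {A : Set (Fin k)} :
    ConsecSet A ↔ A.OrdConnected := by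
  rw [ordConnected_iff]
  exact ⟨fun h a ha b hb _ c hc => h a c b hc.1 hc.2 ha hb,
    fun h a c b hac hcb ha hb => h a ha b hb (hac.trans hcb) ⟨hac, hcb⟩⟩

theorem Set.OrdConnected.image_of_monotone_of_surjective {α β : Type*} [LinearOrder α]
    [PartialOrder β] {s : Set α} {f : α → β} (hs : s.OrdConnected) (hf : Monotone f)
    (hsurj : Function.Surjective f) : (f '' s).OrdConnected := by
  refine ⟨?_⟩
  rintro _ ⟨a, ha, rfl⟩ _ ⟨b, hb, rfl⟩ c ⟨hac, hcb⟩
  rcases hac.eq_or_lt with rfl | hac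
  · exact mem_image_of_mem f ha
  rcases hcb.eq_or_lt with rfl | hcb
  · exact mem_image_of_mem f hb
  obtain ⟨d, rfl⟩ := hsurj c
  exact ⟨d, hs.out ha hb ⟨(hf.reflect_lt hac).le, (hf.reflect_lt hcb).le⟩, rfl⟩

def mergeColIdx {k : ℕ} (i : ℕ) (hi : i + 1 < k) (d : Fin k) : Fin (k - 1) :=
  ⟨if d.val ≤ i then d.val else d.val - 1, by split_ifs <;> omega⟩

section MergeColIdx

variable {k i : ℕ} (hi : i + 1 < k)

theorem mergeColIdx_monotone : Monotone (mergeColIdx i hi) := by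
  intro a b hab
  rw [Fin.le_def] at hab
  simp only [mergeColIdx, Fin.mk_le_mk]
  split_ifs <;> omega

theorem mergeColIdx_surjective : Function.Surjective (mergeColIdx i hi) := by
  intro c
  by_cases hc : c.val ≤ i
  · exact ⟨⟨c.val, by omega⟩, Fin.ext (by simp [mergeColIdx, hc])⟩
  · exact ⟨⟨c.val + 1, by omega⟩, Fin.ext (by simp [mergeColIdx]; omega)⟩

theorem eq_or_merged_of_mergeColIdx_eq {a b : Fin k}
    (h : mergeColIdx i hi a = mergeColIdx i hi b) :
    a = b ∨ (a.val = i ∧ b.val = i + 1) ∨ (a.val = i + 1 ∧ b.val = i) := by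
  rw [Fin.ext_iff] at h ⊢
  simp only [mergeColIdx] at h
  split_ifs at h <;> omega

theorem mergeCols_iff {V : Type} (M : V → Fin k → Prop) (v : V) (c : Fin (k - 1)) :
    mergeCols M i v c ↔ ∃ d, M v d ∧ mergeColIdx i hi d = c := by
  have hc := c.isLt
  have key : ∀ d : Fin k, mergeColIdx i hi d = c ↔
      (c.val < i ∧ d.val = c.val) ∨ (c.val = i ∧ (d.val = i ∨ d.val = i + 1)) ∨
        (i < c.val ∧ d.val = c.val + 1) := by
    intro d
    rw [Fin.ext_iff]
    simp only [mergeColIdx]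
    split_ifs <;> omega
  simp only [key]
  unfold mergeCols
  split_ifs with h1 h2
  · simp [Fin.exists_iff, h1, h1.ne, not_lt_of_gt h1, (by omega : c.val < k)]
  · simp [Fin.exists_iff, h2, and_or_left, exists_or, hi, (by omega : i < k)]
  · simp [Fin.exists_iff, h1, h2, (by omega : i < c.val), (by omega : c.val + 1 < k)]

end MergeColIdx

section Model

variable {V : Type} {k : ℕ} {G : SimpleGraph V} {P K : Set V} {M : V → Fin k → Prop}

theorem rowsOK_mergeCols (hR : RowsOK M) {i : ℕ} (hi : i + 1 < k) :
    RowsOK (mergeCols M i) := by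
  intro v
  have hrow : {c | mergeCols M i v c} = mergeColIdx i hi '' {d | M v d} := by
    ext c
    exact mergeCols_iff hi M v c
  rw [hrow, consecSet_iff_ordConnected]
  exact ⟨(hR v).1.image _, (consecSet_iff_ordConnected.1 (hR v).2).image_of_monotone_of_surjective
    (mergeColIdx_monotone hi) (mergeColIdx_surjective hi)⟩

theorem represents_mergeCols (hRep : Represents G P M) {i : ℕ} (hi : i + 1 < k)
    (hspan : ∀ u v, u ≠ v → (u ∈ P ∨ v ∈ P) → M u ⟨i, by omega⟩ → M v ⟨i + 1, hi⟩ →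
      G.Adj u v) :
    Represents G P (mergeCols M i) := by
  intro u v huv
  simp only [mergeCols_iff hi]
  refine ⟨fun h => ?_, fun ⟨hP, _, ⟨a, ha, rfl⟩, ⟨b, hb, hab⟩⟩ => ?_⟩
  · obtain ⟨hP, d, hu, hv⟩ := (hRep u v huv).1 h
    exact ⟨hP, _, ⟨d, hu, rfl⟩, ⟨d, hv, rfl⟩⟩
  rcases eq_or_merged_of_mergeColIdx_eq hi hab.symm with rfl | ⟨ha', hb'⟩ | ⟨ha', hb'⟩
  · exact (hRep u v huv).2 ⟨hP, a, ha, hb⟩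
  · rw [show a = ⟨i, by omega⟩ from Fin.ext ha'] at ha
    rw [show b = ⟨i + 1, hi⟩ from Fin.ext hb'] at hb
    exact hspan u v huv hP ha hb
  · rw [show a = ⟨i + 1, hi⟩ from Fin.ext ha'] at ha
    rw [show b = ⟨i, by omega⟩ from Fin.ext hb'] at hb
    exact (hspan v u huv.symm hP.symm hb ha).symm

theorem RowsOK.exists_subset_colVerts (hR : RowsOK M) (hne : K.Nonempty)
    (hK : K.Pairwise fun u v => ∃ j, M u j ∧ M v j) : ∃ j, K ⊆ colVerts M j := by
  choose ℓ hℓ hℓle using fun w => exists_min_image {j | M w j} id (toFinite _) (hR w).1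
  obtain ⟨_, ⟨w₁, hw₁, rfl⟩, hmax⟩ := exists_max_image (ℓ '' K) id (toFinite _) (hne.image ℓ)
  refine ⟨ℓ w₁, fun w hw => ?_⟩
  rcases eq_or_ne w w₁ with rfl | hww₁
  · exact hℓ w
  obtain ⟨d, hwd, hw₁d⟩ := hK hw hw₁ hww₁
  exact (hR w).2 _ _ _ (hmax _ (mem_image_of_mem ℓ hw)) (hℓle w₁ d hw₁d) (hℓ w) hwd

theorem subset_colVerts_of_le_of_le (hR : RowsOK M) {a b c : Fin k}
    (ha : K ⊆ colVerts M a) (hb : K ⊆ colVerts M b) (hac : a ≤ c) (hcb : c ≤ b) :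
    K ⊆ colVerts M c :=
  fun w hw => (hR w).2 a c b hac hcb (ha hw) (hb hw)

theorem IsMaxPClique.mem_of_forall_adj (hK : IsMaxPClique G P K) {p : V} (hp : p ∈ P)
    (hadj : ∀ w ∈ K, p ≠ w → G.Adj p w) : p ∈ K := by
  have hins : (insert p K).Pairwise G.Adj :=
    pairwise_insert.2 ⟨hK.1.2, fun w hw hpw => ⟨hadj w hw hpw, (hadj w hw hpw).symm⟩⟩
  exact hK.2 _ (insert_subset hp hK.1.1) hins (subset_insert p K) ▸ mem_insert p K

theorem IsMaxPClique.mem_of_mem_colVerts (hK : IsMaxPClique G P K)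
    (hRep : Represents G P M) {c : Fin k} (hKc : K ⊆ colVerts M c) {p : V} (hp : p ∈ P)
    (hpc : M p c) : p ∈ K :=
  hK.mem_of_forall_adj hp fun w hw hpw => (hRep p w hpw).2 ⟨Or.inl hp, c, hpc, hKc hw⟩

theorem IsMaxPClique.canMerge (hK : IsMaxPClique G P K) (hM : IsPIModel G P M) {i : ℕ}
    (hi : i + 1 < k) (h₀ : K ⊆ colVerts M ⟨i, by omega⟩) (h₁ : K ⊆ colVerts M ⟨i + 1, hi⟩) :
    CanMerge G P M i := by
  refine ⟨hi, rowsOK_mergeCols hM.1 hi, represents_mergeCols hM.2 hi fun u v huv hP hu hv => ?_⟩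
  rcases hP with hp | hp
  · exact (hM.2 u v huv).2 ⟨Or.inl hp, _, h₁ (hK.mem_of_mem_colVerts hM.2 h₀ hp hu), hv⟩
  · exact (hM.2 u v huv).2 ⟨Or.inr hp, _, hu, h₀ (hK.mem_of_mem_colVerts hM.2 h₁ hp hv)⟩

theorem IsMaxPClique.eq_of_subset_colVerts (hK : IsMaxPClique G P K) (hM : IsPIModel G P M)
    (hMin : MinimalModel G P M) {a b : Fin k} (ha : K ⊆ colVerts M a)
    (hb : K ⊆ colVerts M b) : a = b := by
  wlog hab : a < b generalizing a b
  · rcases (not_lt.1 hab).eq_or_lt with h | h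
    · exact h.symm
    · exact (this hb ha h).symm
  have hi : a.val + 1 < k := by omega
  refine absurd (hK.canMerge hM hi ha ?_) (hMin a.val)
  exact subset_colVerts_of_le_of_le hM.1 ha hb (Fin.le_def.2 (Nat.le_succ _)) hab

end Model

theorem stmt3_general {V : Type} (G : SimpleGraph V) (P : Set V)
    (hConn : G.Connected)
    {k : ℕ} (M : V → Fin k → Prop) (hM : IsNormalModel G P M) :
    ∀ K : Set V, IsMaxPClique G P K → ∃! j : Fin k, K ⊆ colVerts M j := by
  obtain ⟨hPI, -, hMin⟩ := hM
  intro K hK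
  obtain ⟨j, hj⟩ : ∃ j, K ⊆ colVerts M j := by
    rcases K.eq_empty_or_nonempty with rfl | hne
    · obtain ⟨v⟩ := hConn.nonempty
      obtain ⟨j, -⟩ := (hPI.1 v).1
      exact ⟨j, empty_subset _⟩
    · exact hPI.1.exists_subset_colVerts hne
        fun u hu v hv huv => ((hPI.2 u v huv).1 (hK.1.2 hu hv huv)).2
  exact ⟨j, hj, fun j' hj' => hK.eq_of_subset_colVerts hPI hMin hj' hj⟩

/-- In every normal probe interval model of a connected probe interval
graph `G`, each clique of `G[P]` is contained in the vertex set of exactly one column. -/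
theorem stmt3 {V : Type} (G : SimpleGraph V) (P : Set V)
    (hIndep : ∀ u v : V, u ∉ P → v ∉ P → ¬ G.Adj u v)
    (hConn : G.Connected)
    {k : ℕ} (M : V → Fin k → Prop) (hM : IsNormalModel G P M) :
    ∀ K : Set V, IsMaxPClique G P K → ∃! j : Fin k, K ⊆ colVerts M j :=
  stmt3_general G P hConn M hM
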